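/- arXiv:1512.04243 — 2 statements merged into one kernel-verified Lean document; each statement's English description precedes it below -/
import Mathlib

section
/- Let V be a subspace of ℝ^{N_b}, let f_1, …, f_L ∈ ℝ^{N_b} with residuals r_j = f_j − P_V f_j, and let {d_n}_{n ∈ Γ} be a finite family of unit-norm vectors with d_n ∉ V for all n ∈ Γ, so that w_n = d_n − P_V d_n ≠ 0. If n* ∈ Γ maximizes over n ∈ Γ the quotient Σ_{j=1}^{L} ⟨d_n, r_j⟩² / ‖d_n − P_V d_n‖², then the enlarged subspace V' = V + span{d_{n*}} minimizes the new total squared residual: Σ_{j=1}^{L} ‖f_j − P_{V + span{d_{n*}}} f_j‖² ≤ Σ_{j=1}^{L} ‖f_j − P_{V + span{d_n}} f_j‖² for every n ∈ Γ. -/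
open Finset

variable {E : Type*} [NormedAddCommGroup E] [InnerProductSpace ℝ E] [FiniteDimensional ℝ E]

lemma key_residual (V : Submodule ℝ E) (f d : E) (hd : d ∉ V) :
    ‖f - (Submodule.orthogonalProjectionOnto (V ⊔ Submodule.span ℝ {d}) f : E)‖ ^ 2
      = ‖f - (Submodule.orthogonalProjectionOnto V f : E)‖ ^ 2
        - (inner ℝ d (f - (Submodule.orthogonalProjectionOnto V f : E)) : ℝ) ^ 2
            / ‖d - (Submodule.orthogonalProjectionOnto V d : E)‖ ^ 2 := by
  set r : E := f - (Submodule.orthogonalProjectionOnto V f : E) with hr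
  set w : E := d - (Submodule.orthogonalProjectionOnto V d : E) with hw
  have hwne : w ≠ 0 := by
    intro h
    apply hd
    have : d = (Submodule.orthogonalProjectionOnto V d : E) := sub_eq_zero.mp h
    rw [this]; exact (Submodule.orthogonalProjectionOnto V d).2
  have hwn : ‖w‖ ^ 2 ≠ 0 := pow_ne_zero 2 (norm_ne_zero_iff.mpr hwne)
  have hrV : r ∈ Vᗮ := V.sub_starProjection_mem_orthogonal f
  have hwV : w ∈ Vᗮ := V.sub_starProjection_mem_orthogonal d
  set c : ℝ := (inner ℝ w r : ℝ) / ‖w‖ ^ 2 with hc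
  have hdw : d - w = (Submodule.orthogonalProjectionOnto V d : E) := by rw [hw]; abel
  have hproj : (Submodule.orthogonalProjectionOnto (V ⊔ Submodule.span ℝ {d}) f : E)
      = (Submodule.orthogonalProjectionOnto V f : E) + c • w := by
    show (V ⊔ Submodule.span ℝ {d}).starProjection f = _
    apply Submodule.eq_starProjection_of_mem_of_inner_eq_zero
    · apply Submodule.add_mem
      · exact Submodule.mem_sup_left (Submodule.orthogonalProjectionOnto V f).2
      · have : c • w = c • d - c • (Submodule.orthogonalProjectionOnto V d : E) := by
          rw [hw, smul_sub]
        rw [this]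
        exact Submodule.sub_mem _
          (Submodule.mem_sup_right (Submodule.smul_mem _ _ (Submodule.mem_span_singleton_self d)))
          (Submodule.mem_sup_left (Submodule.smul_mem _ _ (Submodule.orthogonalProjectionOnto V d).2))
    · intro u hu
      rcases Submodule.mem_sup.mp hu with ⟨a, ha, b, hb, rfl⟩
      rcases Submodule.mem_span_singleton.mp hb with ⟨t, rfl⟩
      have h1 : f - ((Submodule.orthogonalProjectionOnto V f : E) + c • w) = r - c • w := by
        rw [hr]; abel
      have hra : (inner ℝ r a : ℝ) = 0 := by
        rw [real_inner_comm]; exact (Submodule.mem_orthogonal _ _).mp hrV a ha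
      have hwa : (inner ℝ w a : ℝ) = 0 := by
        rw [real_inner_comm]; exact (Submodule.mem_orthogonal _ _).mp hwV a ha
      have hrd : (inner ℝ r (t • d) : ℝ) = t * inner ℝ r w := by
        rw [real_inner_smul_right]
        congr 1
        have h0 : (inner ℝ r (d - w) : ℝ) = 0 := by
          rw [hdw, real_inner_comm]
          exact (Submodule.mem_orthogonal _ _).mp hrV _ (Submodule.orthogonalProjectionOnto V d).2
        have := inner_sub_right (𝕜 := ℝ) r d w
        linarith
      have hwd : (inner ℝ (c • w) (t • d) : ℝ) = t * (c * inner ℝ w w) := by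
        rw [real_inner_smul_right, real_inner_smul_left]
        have h0 : (inner ℝ w (d - w) : ℝ) = 0 := by
          rw [hdw, real_inner_comm]
          exact (Submodule.mem_orthogonal _ _).mp hwV _ (Submodule.orthogonalProjectionOnto V d).2
        have := inner_sub_right (𝕜 := ℝ) w d w
        have : (inner ℝ w d : ℝ) = inner ℝ w w := by linarith
        rw [this]
      have hcw : c * (inner ℝ w w : ℝ) = inner ℝ w r := by
        rw [hc, real_inner_self_eq_norm_sq]
        field_simp
      have hwca : (inner ℝ (c • w) a : ℝ) = 0 := by rw [real_inner_smul_left, hwa]; ring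
      have e1 := inner_sub_left (𝕜 := ℝ) r (c • w) (a + t • d)
      have e2 := inner_add_right (𝕜 := ℝ) r a (t • d)
      have e3 := inner_add_right (𝕜 := ℝ) (c • w) a (t • d)
      rw [h1, e1, e2, e3]
      rw [hra, hrd, hwd, hwca, hcw, real_inner_comm r w]
      ring
  rw [hproj]
  have h1 : f - ((Submodule.orthogonalProjectionOnto V f : E) + c • w) = r - c • w := by rw [hr]; abel
  rw [h1, norm_sub_sq_real, real_inner_smul_right, norm_smul, mul_pow]
  have hdr : (inner ℝ d r : ℝ) = inner ℝ w r := by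
    have h0 : (inner ℝ (d - w) r : ℝ) = 0 := by
      rw [hdw]
      exact real_inner_comm _ r ▸
        ((Submodule.mem_orthogonal _ _).mp hrV _ (Submodule.orthogonalProjectionOnto V d).2)
    have := inner_sub_left (𝕜 := ℝ) d w r
    linarith
  rw [hdr, hc]
  have habs : |(inner ℝ w r : ℝ) / ‖w‖ ^ 2| ^ 2 = ((inner ℝ w r : ℝ) / ‖w‖ ^ 2) ^ 2 := sq_abs _
  rw [Real.norm_eq_abs, habs, real_inner_comm r w]
  field_simp
  ring



/-- OOMP atom selection. With residuals `r j = f j - P_V (f j)` and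
unit-norm atoms `d n ∉ V` (so `w n = d n - P_V (d n) ≠ 0`), the index `n⋆` maximizing
`∑ j, ⟪d n, r j⟫² / ‖d n - P_V (d n)‖²` minimizes the new total squared residual
after enlarging `V` by the selected atom. -/
theorem oomp_atom_selection_minimizes_residual
    (Nb L : ℕ) (V : Submodule ℝ (EuclideanSpace ℝ (Fin Nb)))
    (f : Fin L → EuclideanSpace ℝ (Fin Nb))
    (r : Fin L → EuclideanSpace ℝ (Fin Nb))
    (hr : ∀ j, r j = f j - (Submodule.orthogonalProjectionOnto V (f j) : EuclideanSpace ℝ (Fin Nb)))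
    (Γ : Finset ℕ) (d : ℕ → EuclideanSpace ℝ (Fin Nb))
    (hunit : ∀ n ∈ Γ, ‖d n‖ = 1)
    (hnotin : ∀ n ∈ Γ, d n ∉ V)
    (nstar : ℕ) (hnstar : nstar ∈ Γ)
    (hmax : ∀ n ∈ Γ,
      (∑ j, (inner ℝ (d n) (r j) : ℝ) ^ 2)
          / ‖d n - (Submodule.orthogonalProjectionOnto V (d n) : EuclideanSpace ℝ (Fin Nb))‖ ^ 2
        ≤ (∑ j, (inner ℝ (d nstar) (r j) : ℝ) ^ 2)
          / ‖d nstar - (Submodule.orthogonalProjectionOnto V (d nstar) : EuclideanSpace ℝ (Fin Nb))‖ ^ 2) :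
    ∀ n ∈ Γ,
      (∑ j, ‖f j - (Submodule.orthogonalProjectionOnto (V ⊔ Submodule.span ℝ {d nstar}) (f j) :
                EuclideanSpace ℝ (Fin Nb))‖ ^ 2)
        ≤ ∑ j, ‖f j - (Submodule.orthogonalProjectionOnto (V ⊔ Submodule.span ℝ {d n}) (f j) :
                EuclideanSpace ℝ (Fin Nb))‖ ^ 2 := by
  intro n hn
  have key : ∀ m ∈ Γ,
      (∑ j, ‖f j - (Submodule.orthogonalProjectionOnto (V ⊔ Submodule.span ℝ {d m}) (f j) :
          EuclideanSpace ℝ (Fin Nb))‖ ^ 2)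
        = (∑ j, ‖r j‖ ^ 2)
          - (∑ j, (inner ℝ (d m) (r j) : ℝ) ^ 2)
            / ‖d m - (Submodule.orthogonalProjectionOnto V (d m) : EuclideanSpace ℝ (Fin Nb))‖ ^ 2 := by
    intro m hm
    have h := fun j : Fin L => key_residual V (f j) (d m) (hnotin m hm)
    calc (∑ j, ‖f j - (Submodule.orthogonalProjectionOnto (V ⊔ Submodule.span ℝ {d m}) (f j) :
            EuclideanSpace ℝ (Fin Nb))‖ ^ 2)
        = ∑ j, (‖r j‖ ^ 2 - (inner ℝ (d m) (r j) : ℝ) ^ 2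
            / ‖d m - (Submodule.orthogonalProjectionOnto V (d m) : EuclideanSpace ℝ (Fin Nb))‖ ^ 2) := by
          refine Finset.sum_congr rfl fun j _ => ?_
          rw [h j, hr j]
      _ = _ := by rw [Finset.sum_sub_distrib, Finset.sum_div]
  rw [key nstar hnstar, key n hn]
  linarith [hmax n hn]
end

section
/- Let d_1, …, d_K be linearly independent unit-norm vectors in ℝ^{N_b}. Define the Gram–Schmidt vectors recursively by w_1 = d_1 and w_{k+1} = d_{k+1} − Σ_{n=1}^{k} (w_n / ‖w_n‖²) ⟨w_n, d_{k+1}⟩, and define the dual vectors recursively by b_1^{(1)} = d_1 and, for k = 1, …, K−1, b_{k+1}^{(k+1)} = w_{k+1}/‖w_{k+1}‖² and b_n^{(k+1)} = b_n^{(k)} − b_{k+1}^{(k+1)} ⟨d_{k+1}, b_n^{(k)}⟩ for n = 1, …, k. Then for every k = 1, …, K the vectors b_1^{(k)}, …, b_k^{(k)} are biorthogonal to d_1, …, d_k, i.e., ⟨b_n^{(k)}, d_m⟩ = δ_{n,m} for all n, m = 1, …, k, and span{b_1^{(k)}, …, b_k^{(k)}} = span{d_1, …, d_k}. -/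
private lemma imageIic {α : Type*} (f : ℕ → α) (k : ℕ) :
    f '' Set.Iic k = Set.range (fun i : Fin (k+1) => f i) := by
  ext x
  constructor
  · rintro ⟨n, hn, rfl⟩
    exact ⟨⟨n, by simpa [Nat.lt_succ_iff] using hn⟩, rfl⟩
  · rintro ⟨i, rfl⟩
    exact ⟨i, by simpa [Nat.lt_succ_iff] using i.isLt, rfl⟩

private lemma inner_span_zero {Nb : ℕ} {v : EuclideanSpace ℝ (Fin Nb)} {s : Set (EuclideanSpace ℝ (Fin Nb))}
    (h : ∀ u ∈ s, (inner ℝ v u : ℝ) = 0) {x : EuclideanSpace ℝ (Fin Nb)}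
    (hx : x ∈ Submodule.span ℝ s) : (inner ℝ v x : ℝ) = 0 := by
  induction hx using Submodule.span_induction with
  | mem u hu => exact h u hu
  | zero => simp
  | add y z _ _ hy hz => rw [inner_add_right, hy, hz]; ring
  | smul c y _ hy => rw [real_inner_smul_right, hy]; ring

/-- Adaptive biorthogonalization. With 0-based indexing, `d 0, …, d (K-1)`
are linearly independent unit-norm vectors, the Gram–Schmidt vectors satisfy `w 0 = d 0`
and `w (k+1) = d (k+1) - ∑_{n ≤ k} (⟪w n, d (k+1)⟫ / ‖w n‖²) • w n`, and the dual
vectors `b k n` (which stand for `b_n^{(k)}`) satisfy `b 0 0 = d 0`,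
`b (k+1) (k+1) = (1/‖w (k+1)‖²) • w (k+1)` and
`b (k+1) n = b k n - ⟪d (k+1), b k n⟫ • b (k+1) (k+1)` for `n ≤ k`. Then for every
`k < K` the vectors `b k 0, …, b k k` are biorthogonal to `d 0, …, d k` and span
the same subspace. -/
theorem biorthogonal_recursion_of_gram_schmidt
    (Nb K : ℕ)
    (d : ℕ → EuclideanSpace ℝ (Fin Nb))
    (hind : LinearIndependent ℝ (fun i : Fin K => d i))
    (hunit : ∀ i < K, ‖d i‖ = 1)
    (w : ℕ → EuclideanSpace ℝ (Fin Nb))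
    (hw0 : w 0 = d 0)
    (hwrec : ∀ k, k + 1 < K →
      w (k + 1) = d (k + 1)
        - ∑ n ∈ Finset.range (k + 1), ((inner ℝ (w n) (d (k + 1)) : ℝ) / ‖w n‖ ^ 2) • w n)
    (b : ℕ → ℕ → EuclideanSpace ℝ (Fin Nb))
    (hb0 : b 0 0 = d 0)
    (hbdiag : ∀ k, k + 1 < K → b (k + 1) (k + 1) = (1 / ‖w (k + 1)‖ ^ 2) • w (k + 1))
    (hbrec : ∀ k, k + 1 < K → ∀ n ≤ k,
      b (k + 1) n = b k n - (inner ℝ (d (k + 1)) (b k n) : ℝ) • b (k + 1) (k + 1)) :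
    ∀ k < K,
      (∀ n ≤ k, ∀ m ≤ k, (inner ℝ (b k n) (d m) : ℝ) = if n = m then 1 else 0)
      ∧ Submodule.span ℝ ((fun n => b k n) '' Set.Iic k)
          = Submodule.span ℝ (d '' Set.Iic k) := by
  -- w agrees with gramSchmidt below K
  have hwg : ∀ k, k < K → w k = InnerProductSpace.gramSchmidt ℝ d k := by
    intro k
    induction k using Nat.strong_induction_on with
    | _ k ih =>
      intro hk
      match k with
      | 0 => rw [hw0, InnerProductSpace.gramSchmidt_def]; simp [Nat.Iio_eq_range]
      | Nat.succ k =>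
        rw [hwrec k hk, InnerProductSpace.gramSchmidt_def]
        congr 1
        rw [Nat.Iio_eq_range]
        refine Finset.sum_congr rfl fun i hi => ?_
        have hi' : i < k + 1 := by simpa using hi
        rw [Submodule.starProjection_singleton, ← ih i hi' (by omega)]
        norm_num
  -- orthogonality of the w's
  have horth : ∀ i < K, ∀ j < K, i ≠ j → (inner ℝ (w i) (w j) : ℝ) = 0 := by
    intro i hi j hj hij
    rw [hwg i hi, hwg j hj]
    exact InnerProductSpace.gramSchmidt_orthogonal ℝ d hij
  -- nonvanishing of the w's
  have hwne : ∀ k < K, w k ≠ 0 := by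
    intro k hk
    rw [hwg k hk]
    refine InnerProductSpace.gramSchmidt_ne_zero_coe (𝕜 := ℝ) k ?_
    have hinj : Function.Injective (fun n : Set.Iic k => (⟨(n : ℕ), lt_of_le_of_lt n.2 hk⟩ : Fin K)) := by
      intro a b hab
      ext
      exact congrArg Fin.val hab
    exact hind.comp _ hinj
  -- spans of the w's equal spans of the d's
  have hspanw : ∀ k < K, Submodule.span ℝ (w '' Set.Iic k) = Submodule.span ℝ (d '' Set.Iic k) := by
    intro k hk
    have him : w '' Set.Iic k = InnerProductSpace.gramSchmidt ℝ d '' Set.Iic k := by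
      refine Set.image_congr fun n hn => hwg n (lt_of_le_of_lt hn hk)
    rw [him, InnerProductSpace.span_gramSchmidt_Iic]
  -- ⟪w k, d m⟫ = 0 for m < k
  have hwd0 : ∀ k < K, ∀ m < k, (inner ℝ (w k) (d m) : ℝ) = 0 := by
    intro k hk m hm
    have hdm : d m ∈ Submodule.span ℝ (w '' Set.Iic m) := by
      rw [hspanw m (by omega)]
      exact Submodule.subset_span ⟨m, Set.self_mem_Iic, rfl⟩
    refine inner_span_zero ?_ hdm
    rintro u ⟨j, hj, rfl⟩
    have hj' : j ≤ m := hj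
    exact horth k hk j (by omega) (by omega)
  -- ⟪w k, d k⟫ = ‖w k‖²
  have hwdk : ∀ k < K, (inner ℝ (w k) (d k) : ℝ) = ‖w k‖ ^ 2 := by
    intro k hk
    match k with
    | 0 => rw [hw0, real_inner_self_eq_norm_sq]
    | Nat.succ k =>
      have h := hwrec k hk
      have : d (k+1) = w (k+1) + ∑ n ∈ Finset.range (k + 1),
          ((inner ℝ (w n) (d (k + 1)) : ℝ) / ‖w n‖ ^ 2) • w n := by
        rw [h]; abel
      rw [this, inner_add_right, real_inner_self_eq_norm_sq, inner_sum]
      have hz : ∀ n ∈ Finset.range (k+1),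
          (inner ℝ (w (k+1)) (((inner ℝ (w n) (d (k + 1)) : ℝ) / ‖w n‖ ^ 2) • w n) : ℝ) = 0 := by
        intro n hn
        have hn' : n < k + 1 := by simpa using hn
        rw [real_inner_smul_right, horth (k+1) hk n (by omega) (by omega)]
        ring
      rw [Finset.sum_congr rfl hz]
      simp
  -- main induction: biorthogonality and membership
  have main : ∀ k, k < K →
      (∀ n ≤ k, ∀ m ≤ k, (inner ℝ (b k n) (d m) : ℝ) = if n = m then 1 else 0)
      ∧ (∀ n ≤ k, b k n ∈ Submodule.span ℝ (d '' Set.Iic k)) := by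
    intro k
    induction k with
    | zero =>
      intro hk
      constructor
      · intro n hn m hm
        interval_cases n
        interval_cases m
        rw [hb0, real_inner_self_eq_norm_sq, hunit 0 hk]
        norm_num
      · intro n hn
        interval_cases n
        rw [hb0]
        exact Submodule.subset_span ⟨0, Set.self_mem_Iic, rfl⟩
    | succ k ih =>
      intro hk
      have hk' : k < K := by omega
      obtain ⟨ihio, ihmem⟩ := ih hk'
      have hdiag : ∀ m ≤ k + 1, (inner ℝ (b (k+1) (k+1)) (d m) : ℝ) = if k + 1 = m then 1 else 0 := by
        intro m hm
        rw [hbdiag k hk, real_inner_smul_left]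
        by_cases hmk : k + 1 = m
        · subst hmk
          rw [hwdk (k+1) hk, if_pos rfl]
          have := hwne (k+1) hk
          have hne : ‖w (k+1)‖ ^ 2 ≠ 0 := pow_ne_zero _ (norm_ne_zero_iff.2 this)
          field_simp
        · rw [hwd0 (k+1) hk m (by omega), if_neg hmk]
          ring
      constructor
      · intro n hn m hm
        rcases Nat.lt_or_ge n (k + 1) with h | h
        · have hn' : n ≤ k := by omega
          rw [hbrec k hk n hn', inner_sub_left, real_inner_smul_left]
          by_cases hm' : m = k + 1
          · subst hm'
            rw [hdiag (k+1) le_rfl, if_pos rfl, real_inner_comm (d (k+1)) (b k n),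
              if_neg (show ¬(n = k + 1) by omega)]
            ring
          · have hm2 : m ≤ k := by omega
            rw [ihio n hn' m hm2, hdiag m hm, if_neg (show ¬(k + 1 = m) by omega)]
            ring
        · have hn1 : n = k + 1 := by omega
          subst hn1
          exact hdiag m hm
      · have hmd : b (k+1) (k+1) ∈ Submodule.span ℝ (d '' Set.Iic (k+1)) := by
          rw [hbdiag k hk]
          refine Submodule.smul_mem _ _ ?_
          rw [← hspanw (k+1) hk]
          exact Submodule.subset_span ⟨k+1, Set.self_mem_Iic, rfl⟩
        intro n hn
        rcases Nat.lt_or_ge n (k + 1) with h | h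
        · rw [hbrec k hk n (by omega)]
          refine Submodule.sub_mem _ ?_ (Submodule.smul_mem _ _ hmd)
          exact Submodule.span_mono (Set.image_mono (Set.Iic_subset_Iic.2 (by omega))) (ihmem n (by omega))
        · have hn1 : n = k + 1 := by omega
          subst hn1
          exact hmd
  intro k hk
  refine ⟨(main k hk).1, ?_⟩
  have hio := (main k hk).1
  have hle : Submodule.span ℝ ((fun n => b k n) '' Set.Iic k) ≤ Submodule.span ℝ (d '' Set.Iic k) := by
    rw [Submodule.span_le]
    rintro x ⟨n, hn, rfl⟩
    exact (main k hk).2 n hn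
  have himb : (fun n => b k n) '' Set.Iic k = Set.range (fun i : Fin (k+1) => b k i) := imageIic _ k
  have himd : d '' Set.Iic k = Set.range (fun i : Fin (k+1) => d i) := imageIic _ k
  have hlib : LinearIndependent ℝ (fun i : Fin (k+1) => b k i) := by
    rw [Fintype.linearIndependent_iff]
    intro g hg m
    have h2 : (inner ℝ (∑ i : Fin (k+1), g i • b k (i : ℕ)) (d (m : ℕ)) : ℝ) = 0 := by
      rw [hg]; simp
    rw [sum_inner] at h2
    have h3 : ∀ i : Fin (k+1), (inner ℝ (g i • b k (i : ℕ)) (d (m : ℕ)) : ℝ)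
        = if i = m then g i else 0 := by
      intro i
      rw [real_inner_smul_left, hio i (by omega) m (by omega)]
      by_cases hi : i = m
      · subst hi; simp
      · rw [if_neg (fun h => hi (Fin.ext h)), if_neg hi]; ring
    rw [Finset.sum_congr rfl (fun i _ => h3 i), Finset.sum_ite_eq' Finset.univ m g] at h2
    simpa using h2
  have hlid : LinearIndependent ℝ (fun i : Fin (k+1) => d i) := by
    have := hind.comp (Fin.castLE (by omega : k + 1 ≤ K)) (Fin.castLE_injective _)
    exact this
  refine le_antisymm hle ?_
  have hrank : Module.finrank ℝ (Submodule.span ℝ (d '' Set.Iic k))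
      ≤ Module.finrank ℝ (Submodule.span ℝ ((fun n => b k n) '' Set.Iic k)) := by
    rw [himb, himd, finrank_span_eq_card hlib, finrank_span_eq_card hlid]
  exact (Submodule.eq_of_le_of_finrank_le hle hrank).ge
end
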